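/- arXiv:1507.03509 — 3 statements merged into one kernel-verified Lean document; each statement's English description precedes it below -/
import Mathlib

section
/- Any beacon attraction path in an axis-aligned orthogonal polygon is both x-monotone and y-monotone: if the path is parametrized by γ(t), then the x-coordinate of γ(t) moves monotonically toward the beacon's x-coordinate, and similarly for the y-coordinate. -/
/-!
A step toward the beacon scales the vector `v i - q` by a factor in `[0, 1]`, which shrinks both
of its coordinates. A slide keeps one coordinate of `v i` and does not increase the distance
to `q`, so the absolute value of the other coordinate of `v i - q` cannot grow either.
-/

open Set

/-- Euclidean distance between points of the plane `ℝ × ℝ`. -/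
noncomputable def euclDist (p q : ℝ × ℝ) : ℝ :=
  Real.sqrt ((p.1 - q.1) ^ 2 + (p.2 - q.2) ^ 2)

theorem abs_sub_le_of_mem_segment {𝕜 : Type*} [Field 𝕜] [LinearOrder 𝕜] [IsStrictOrderedRing 𝕜]
    {x y q : 𝕜} (h : y ∈ segment 𝕜 x q) : |y - q| ≤ |x - q| := by
  rw [segment_eq_uIcc] at h
  simpa only [abs_sub_comm q] using abs_sub_right_of_mem_uIcc h

section
variable {𝕜 E F : Type*} [Semiring 𝕜] [PartialOrder 𝕜] [AddCommMonoid E] [Module 𝕜 E]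
  [AddCommMonoid F] [Module 𝕜 F] {x y q : E × F}

theorem Prod.fst_mem_segment (h : y ∈ segment 𝕜 x q) : y.1 ∈ segment 𝕜 x.1 q.1 := by
  obtain ⟨a, b, ha, hb, hab, rfl⟩ := h
  exact ⟨a, b, ha, hb, hab, rfl⟩

theorem Prod.snd_mem_segment (h : y ∈ segment 𝕜 x q) : y.2 ∈ segment 𝕜 x.2 q.2 := by
  obtain ⟨a, b, ha, hb, hab, rfl⟩ := h
  exact ⟨a, b, ha, hb, hab, rfl⟩

end

-- In the lattice `ℝ × ℝ`, `|p - q| = (|p.1 - q.1|, |p.2 - q.2|)` and `≤` is componentwise.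
theorem Prod.abs_sub_le_of_mem_segment {x y q : ℝ × ℝ} (h : y ∈ segment ℝ x q) :
    |y - q| ≤ |x - q| :=
  ⟨_root_.abs_sub_le_of_mem_segment (fst_mem_segment h),
    _root_.abs_sub_le_of_mem_segment (snd_mem_segment h)⟩

theorem euclDist_le_euclDist_iff {p p' q : ℝ × ℝ} :
    euclDist p q ≤ euclDist p' q ↔
      (p.1 - q.1) ^ 2 + (p.2 - q.2) ^ 2 ≤ (p'.1 - q.1) ^ 2 + (p'.2 - q.2) ^ 2 :=
  Real.sqrt_le_sqrt_iff (by positivity)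

theorem abs_sub_le_of_euclDist_le_of_fst_eq {p p' q : ℝ × ℝ} (hx : p.1 = p'.1)
    (hd : euclDist p q ≤ euclDist p' q) : |p - q| ≤ |p' - q| := by
  rw [euclDist_le_euclDist_iff, hx, add_le_add_iff_left, sq_le_sq] at hd
  exact ⟨(congrArg (|· - q.1|) hx).le, hd⟩

theorem abs_sub_le_of_euclDist_le_of_snd_eq {p p' q : ℝ × ℝ} (hy : p.2 = p'.2)
    (hd : euclDist p q ≤ euclDist p' q) : |p - q| ≤ |p' - q| := by
  rw [euclDist_le_euclDist_iff, hy, add_le_add_iff_right, sq_le_sq] at hd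
  exact ⟨hd, (congrArg (|· - q.2|) hy).le⟩

/-- A beacon attraction path toward beacon `q` in an orthogonal polygon,
recorded by its vertices `v 0, v 1, …, v m`: each step either moves straight
toward the beacon (`v (i+1)` lies on the segment from `v i` to `q`) or slides
along an axis-parallel wall while the Euclidean distance to `q` decreases
(strictly at the endpoints, monotonically along the slide).  Any such path is
both x-monotone and y-monotone: the distances `|x(v i) - x(q)|` and
`|y(v i) - y(q)|` to the beacon's coordinates are non-increasing along the path. -/
theorem attraction_path_xy_monotone (q : ℝ × ℝ) (m : ℕ) (v : ℕ → ℝ × ℝ)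
    (hstep : ∀ i < m,
      v (i + 1) ∈ segment ℝ (v i) q ∨
      (((v (i + 1)).1 = (v i).1 ∨ (v (i + 1)).2 = (v i).2) ∧
        AntitoneOn (fun t : ℝ => euclDist ((1 - t) • v i + t • v (i + 1)) q) (Icc 0 1) ∧
        euclDist (v (i + 1)) q < euclDist (v i) q)) :
    ∀ i j : ℕ, i ≤ j → j ≤ m →
      |(v j).1 - q.1| ≤ |(v i).1 - q.1| ∧ |(v j).2 - q.2| ≤ |(v i).2 - q.2| := by
  have hsucc : ∀ i < m, |v (i + 1) - q| ≤ |v i - q| := by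
    intro i hi
    rcases hstep i hi with hseg | ⟨hx | hy, -, hd⟩
    · exact Prod.abs_sub_le_of_mem_segment hseg
    · exact abs_sub_le_of_euclDist_le_of_fst_eq hx hd.le
    · exact abs_sub_le_of_euclDist_le_of_snd_eq hy hd.le
  have hanti : AntitoneOn (fun i ↦ |v i - q|) (Iic m) :=
    antitoneOn_of_add_one_le ordConnected_Iic fun i _ _ hi ↦ hsucc i hi
  intro i j hij hjm
  exact hanti (hij.trans hjm) hjm hij
end

section
/- Let R be an axis-aligned rectangle contained in a polygon P, let b ∈ P be a point, and suppose the rectangular hull RH(R ∪ {b}) (the smallest axis-aligned rectangle containing R and b) is contained in P. Then b covers R: for every point p ∈ R, b attracts p and p attracts b. -/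
open Set

/-- A beacon at `q` attracts the point `p` in the region `P`. -/
def Attracts (P : Set (ℝ × ℝ)) (q p : ℝ × ℝ) : Prop :=
  ∃ γ : ℝ → ℝ × ℝ, ContinuousOn γ (Icc 0 1) ∧ γ 0 = p ∧ γ 1 = q ∧
    (∀ t ∈ Icc (0 : ℝ) 1, γ t ∈ P) ∧
    AntitoneOn (fun t => euclDist (γ t) q) (Icc 0 1)

/-- `p` covers `q`: each attracts the other. -/
def Covers (P : Set (ℝ × ℝ)) (p q : ℝ × ℝ) : Prop :=
  Attracts P p q ∧ Attracts P q p

/-!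
The rectangular hull `H` of `R ∪ {b}` is convex, so for `p ∈ R` the segment `[p, b]` lies in
`H ⊆ P`. Along a segment the distance to the endpoint decreases linearly, so the segment is
an attraction path in both directions.
-/

lemma euclDist_lineMap_right (p q : ℝ × ℝ) (t : ℝ) :
    euclDist (AffineMap.lineMap p q t) q = |1 - t| * euclDist p q := by
  have hfst : (AffineMap.lineMap p q t).1 - q.1 = (1 - t) * (p.1 - q.1) := by
    simp only [AffineMap.lineMap_apply_module, Prod.fst_add, Prod.smul_fst, smul_eq_mul]; ring
  have hsnd : (AffineMap.lineMap p q t).2 - q.2 = (1 - t) * (p.2 - q.2) := by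
    simp only [AffineMap.lineMap_apply_module, Prod.snd_add, Prod.smul_snd, smul_eq_mul]; ring
  rw [euclDist, euclDist, hfst, hsnd, mul_pow, mul_pow, ← mul_add,
    Real.sqrt_mul (sq_nonneg _), Real.sqrt_sq_eq_abs]

lemma attracts_of_segment_subset {P : Set (ℝ × ℝ)} {p q : ℝ × ℝ} (h : segment ℝ p q ⊆ P) :
    Attracts P q p := by
  refine ⟨AffineMap.lineMap p q, AffineMap.lineMap_continuous.continuousOn,
    AffineMap.lineMap_apply_zero p q, AffineMap.lineMap_apply_one p q,
    fun t ht => h (segment_eq_image_lineMap ℝ p q ▸ mem_image_of_mem _ ht), ?_⟩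
  intro s hs t ht hst
  simp only [euclDist_lineMap_right, abs_of_nonneg (sub_nonneg.2 hs.2),
    abs_of_nonneg (sub_nonneg.2 ht.2)]
  exact mul_le_mul_of_nonneg_right (by linarith) (Real.sqrt_nonneg _)

lemma Convex.covers {S P : Set (ℝ × ℝ)} (hS : Convex ℝ S) (hSP : S ⊆ P) {p q : ℝ × ℝ}
    (hp : p ∈ S) (hq : q ∈ S) : Covers P p q :=
  ⟨attracts_of_segment_subset ((hS.segment_subset hq hp).trans hSP),
    attracts_of_segment_subset ((hS.segment_subset hp hq).trans hSP)⟩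

lemma Icc_subset_Icc_min_max (a₁ a₂ x : ℝ) : Icc a₁ a₂ ⊆ Icc (min a₁ x) (max a₂ x) :=
  Icc_subset_Icc (min_le_left _ _) (le_max_left _ _)

lemma mem_Icc_min_max (a₁ a₂ x : ℝ) : x ∈ Icc (min a₁ x) (max a₂ x) :=
  ⟨min_le_right _ _, le_max_right _ _⟩

theorem hull_contained_covers_general (P : Set (ℝ × ℝ)) (a₁ a₂ c₁ c₂ : ℝ)
    (b : ℝ × ℝ)
    (hhull : Icc (min a₁ b.1) (max a₂ b.1) ×ˢ Icc (min c₁ b.2) (max c₂ b.2) ⊆ P) :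
    ∀ p ∈ Icc a₁ a₂ ×ˢ Icc c₁ c₂, Attracts P b p ∧ Attracts P p b ∧ Covers P b p := by
  intro p hp
  have hconv : Convex ℝ (Icc (min a₁ b.1) (max a₂ b.1) ×ˢ Icc (min c₁ b.2) (max c₂ b.2)) :=
    (convex_Icc _ _).prod (convex_Icc _ _)
  have hpH := prod_mono (Icc_subset_Icc_min_max a₁ a₂ b.1) (Icc_subset_Icc_min_max c₁ c₂ b.2) hp
  have hbH : b ∈ Icc (min a₁ b.1) (max a₂ b.1) ×ˢ Icc (min c₁ b.2) (max c₂ b.2) :=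
    ⟨mem_Icc_min_max a₁ a₂ b.1, mem_Icc_min_max c₁ c₂ b.2⟩
  have hcov : Covers P b p := hconv.covers hhull hbH hpH
  exact ⟨hcov.1, hcov.2, hcov⟩

/-- If `R = [a₁,a₂] × [c₁,c₂]` is an axis-aligned rectangle contained in the
polygon `P`, `b ∈ P`, and the rectangular hull `RH(R ∪ {b})` (the smallest
axis-aligned rectangle containing `R` and `b`) is contained in `P`, then `b`
covers `R`: for every `p ∈ R`, `b` attracts `p` and `p` attracts `b`. -/
theorem hull_contained_covers (P : Set (ℝ × ℝ)) (a₁ a₂ c₁ c₂ : ℝ)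
    (ha : a₁ ≤ a₂) (hc : c₁ ≤ c₂) (b : ℝ × ℝ)
    (hR : Icc a₁ a₂ ×ˢ Icc c₁ c₂ ⊆ P) (hb : b ∈ P)
    (hhull : Icc (min a₁ b.1) (max a₂ b.1) ×ˢ Icc (min c₁ b.2) (max c₂ b.2) ⊆ P) :
    ∀ p ∈ Icc a₁ a₂ ×ˢ Icc c₁ c₂, Attracts P b p ∧ Attracts P p b ∧ Covers P b p :=
  hull_contained_covers_general P a₁ a₂ c₁ c₂ b hhull
end

section
/- Let R be a rectangle of the vertical decomposition of an orthogonal polygon, and let S be a tall left neighbor of R (S covers a strictly larger interval of y-coordinates than R along their shared vertical). Then S is the only left neighbor of R. -/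
open Set

theorem Finset.eq_singleton_of_pairwiseDisjoint_of_inter_nonempty {α ι : Type*}
    {N : Finset ι} {S : ι → Set α} {A : Set α} (hdisj : (N : Set ι).PairwiseDisjoint S)
    (hmeet : ∀ i ∈ N, (S i ∩ A).Nonempty) {s : ι} (hs : s ∈ N) (hA : A ⊆ S s) :
    N = {s} := by
  refine Finset.eq_singleton_iff_unique_mem.2 ⟨hs, fun i hi => ?_⟩
  by_contra hne
  obtain ⟨x, hxi, hxA⟩ := hmeet i hi
  exact Set.disjoint_left.1 (hdisj hi hs hne) hxi (hA hxA)

/-- The left side of `R` is the y-interval `(l, u)`; a left neighbour `i ∈ N` is recorded by its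
y-span `(c i, d i)` along the shared vertical chord. -/
theorem tall_neighbor_is_only_neighbor_general {ι : Type*}
    (N : Finset ι) (c d : ι → ℝ) (l u : ℝ)
    (hmeet : ∀ i ∈ N, (Ioo (c i) (d i) ∩ Ioo l u).Nonempty)
    (hdisj : ∀ i ∈ N, ∀ j ∈ N, i ≠ j → Disjoint (Ioo (c i) (d i)) (Ioo (c j) (d j)))
    (s : ι) (hs : s ∈ N) (htall : c s < l ∧ u < d s) :
    N = {s} :=
  Finset.eq_singleton_of_pairwiseDisjoint_of_inter_nonempty
    (S := fun i => Ioo (c i) (d i)) (fun i hi j hj hij => hdisj i hi j hj hij) hmeet hs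
    (Ioo_subset_Ioo htall.1.le htall.2.le)

/-- In the vertical decomposition, model the left side of rectangle `R` as the
y-interval `(l, u)` and its left neighbors by their y-spans `(c i, d i)`: each
neighbor's span meets `(l, u)`, and distinct neighbors have disjoint open
spans.  If a neighbor `s` is tall (its span strictly contains `[l, u]`), then
`s` is the only left neighbor of `R`. -/
theorem tall_neighbor_is_only_neighbor {ι : Type*} [DecidableEq ι]
    (N : Finset ι) (c d : ι → ℝ) (l u : ℝ) (hlu : l < u)
    (hcd : ∀ i ∈ N, c i < d i)
    (hmeet : ∀ i ∈ N, (Ioo (c i) (d i) ∩ Ioo l u).Nonempty)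
    (hdisj : ∀ i ∈ N, ∀ j ∈ N, i ≠ j → Disjoint (Ioo (c i) (d i)) (Ioo (c j) (d j)))
    (s : ι) (hs : s ∈ N) (htall : c s < l ∧ u < d s) :
    N = {s} :=
  tall_neighbor_is_only_neighbor_general N c d l u hmeet hdisj s hs htall
end
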